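/- Let κ, β_i, γ̃_ij, A_ij, Γ_i be smooth fields on ℝ × ℝ³ satisfying the linearized BSSN evolution equations (E4) and (E6). Then at every point of ℝ × ℝ³ and for each i, ∂_t(Γ_i − ∂_l γ̃_il) = 2 M_i, where M_i := ∂_l A_il − (2/3)∂_i κ. In particular, if the momentum constraint M_i = 0 holds everywhere, then the constraint quantity Γ_i − ∂_l γ̃_il is independent of time. -/

import Mathlib

noncomputable section

/-- Spacetime ℝ × ℝ³. -/
abbrev Spc : Type := ℝ × (Fin 3 → ℝ)

/-- Time derivative ∂_t. -/
noncomputable def pt (f : Spc → ℝ) : Spc → ℝ :=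
  fun p => deriv (fun s => f (s, p.2)) p.1

/-- Spatial partial derivative ∂_i. -/
noncomputable def ps (i : Fin 3) (f : Spc → ℝ) : Spc → ℝ :=
  fun p => deriv (fun s => f (p.1, Function.update p.2 i s)) (p.2 i)

/-- Spatial Laplacian Δ = Σ_i ∂_i ∂_i. -/
noncomputable def lap (f : Spc → ℝ) : Spc → ℝ :=
  fun p => ∑ i : Fin 3, ps i (ps i f) p

/-- Kronecker delta δ_ij. -/
noncomputable def kron (i j : Fin 3) : ℝ := if i = j then 1 else 0

/-! Smoothness lets `∂_t` commute with `∂_l`, so `∂_t ∂_l γ̃_il = ∂_l ∂_t γ̃_il` is read off from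
(E4). Its divergence contains `∂_l ∂_i β_l = ∂_i ∂_l β_l`; together with the Laplacian and the
trace term this reproduces exactly the shift terms `(1/3) ∂_i ∂_l β_l + Δβ_i` of (E6), which
therefore cancel in `∂_t (Γ_i − ∂_l γ̃_il)`, leaving `2 ∂_l A_il − (4/3) ∂_i κ = 2 M_i`.
When `M_i = 0` the mean value theorem makes the constraint quantity constant in time. -/

open Finset
open scoped ContDiff

namespace Spc

def timeDir : Spc := (1, 0)

def spaceDir (i : Fin 3) : Spc := (0, Pi.single i 1)

end Spc

open Spc

theorem pt_eq_fderiv {f : Spc → ℝ} {p : Spc} (hf : DifferentiableAt ℝ f p) :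
    pt f p = fderiv ℝ f p timeDir :=
  (hf.hasFDerivAt.comp_hasDerivAt p.1
    ((hasDerivAt_id p.1).prodMk (hasDerivAt_const p.1 p.2))).deriv

theorem ps_eq_fderiv {f : Spc → ℝ} {p : Spc} (hf : DifferentiableAt ℝ f p) (i : Fin 3) :
    ps i f p = fderiv ℝ f p (spaceDir i) := by
  have hcurve : HasDerivAt (fun s => ((p.1, Function.update p.2 i s) : Spc)) (spaceDir i)
      (p.2 i) :=
    (hasDerivAt_const _ p.1).prodMk (hasDerivAt_update p.2 i (p.2 i))
  exact (hf.hasFDerivAt.comp_hasDerivAt_of_eq _ hcurve (by simp)).deriv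

theorem fderiv_fderiv_apply_comm {E F : Type*} [NormedAddCommGroup E] [NormedSpace ℝ E]
    [NormedAddCommGroup F] [NormedSpace ℝ F] {f : E → F} (hf : ContDiff ℝ 2 f) (v w : E) :
    (fun p => fderiv ℝ (fun q => fderiv ℝ f q v) p w) =
      fun p => fderiv ℝ (fun q => fderiv ℝ f q w) p v := by
  funext p
  have hdf : DifferentiableAt ℝ (fderiv ℝ f) p :=
    (hf.fderiv_right (m := 1) le_rfl).differentiable one_ne_zero p
  have happly (a b : E) :
      fderiv ℝ (fun q => fderiv ℝ f q a) p b = fderiv ℝ (fderiv ℝ f) p b a := by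
    rw [fderiv_clm_apply hdf (differentiableAt_const a)]
    simp
  rw [happly, happly]
  exact hf.contDiffAt.isSymmSndFDerivAt (by simp [minSmoothness_of_isRCLikeNormedField]) w v

section Operators

variable {f g : Spc → ℝ}

theorem pt_eq_fderiv_fun (hf : Differentiable ℝ f) : pt f = fun p => fderiv ℝ f p timeDir :=
  funext fun p => pt_eq_fderiv (hf p)

theorem ps_eq_fderiv_fun (hf : Differentiable ℝ f) (i : Fin 3) :
    ps i f = fun p => fderiv ℝ f p (spaceDir i) :=
  funext fun p => ps_eq_fderiv (hf p) i

theorem ContDiff.fderiv_apply_const {E F : Type*} [NormedAddCommGroup E] [NormedSpace ℝ E]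
    [NormedAddCommGroup F] [NormedSpace ℝ F] {f : E → F} (hf : ContDiff ℝ ∞ f) (v : E) :
    ContDiff ℝ ∞ (fun p => fderiv ℝ f p v) :=
  (hf.fderiv_right (m := ∞) (by simp)).clm_apply contDiff_const

theorem ContDiff.ps (hf : ContDiff ℝ ∞ f) (i : Fin 3) : ContDiff ℝ ∞ (ps i f) := by
  rw [ps_eq_fderiv_fun (hf.differentiable (by simp))]
  exact hf.fderiv_apply_const (spaceDir i)

theorem pt_ps_comm (hf : ContDiff ℝ ∞ f) (i : Fin 3) : pt (ps i f) = ps i (pt f) := by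
  have hf' := hf.differentiable (by simp)
  rw [ps_eq_fderiv_fun hf', pt_eq_fderiv_fun hf',
    pt_eq_fderiv_fun ((hf.fderiv_apply_const _).differentiable (by simp)),
    ps_eq_fderiv_fun ((hf.fderiv_apply_const _).differentiable (by simp))]
  exact fderiv_fderiv_apply_comm (hf.of_le (WithTop.coe_le_coe.mpr le_top)) _ _

theorem ps_ps_comm (hf : ContDiff ℝ ∞ f) (i j : Fin 3) : ps i (ps j f) = ps j (ps i f) := by
  have hf' := hf.differentiable (by simp)
  rw [ps_eq_fderiv_fun hf' i, ps_eq_fderiv_fun hf' j,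
    ps_eq_fderiv_fun ((hf.fderiv_apply_const _).differentiable (by simp)),
    ps_eq_fderiv_fun ((hf.fderiv_apply_const _).differentiable (by simp))]
  exact fderiv_fderiv_apply_comm (hf.of_le (WithTop.coe_le_coe.mpr le_top)) _ _

theorem pt_fun_sub (hf : Differentiable ℝ f) (hg : Differentiable ℝ g) :
    pt (fun q => f q - g q) = fun q => pt f q - pt g q := by
  funext p
  rw [pt_eq_fderiv ((hf.fun_sub hg) p), pt_eq_fderiv (hf p), pt_eq_fderiv (hg p),
    fderiv_fun_sub (hf p) (hg p)]
  rfl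

theorem pt_fun_sum {ι : Type*} {u : Finset ι} {F : ι → Spc → ℝ}
    (hF : ∀ l ∈ u, Differentiable ℝ (F l)) :
    pt (fun q => ∑ l ∈ u, F l q) = fun q => ∑ l ∈ u, pt (F l) q := by
  funext p
  rw [pt_eq_fderiv (Differentiable.fun_sum hF p), fderiv_fun_sum fun l hl => hF l hl p]
  simp only [FunLike.coe_sum, Finset.sum_apply]
  exact sum_congr rfl fun l hl => (pt_eq_fderiv (hF l hl p)).symm

theorem ps_fun_add (hf : Differentiable ℝ f) (hg : Differentiable ℝ g) (i : Fin 3) :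
    ps i (fun q => f q + g q) = fun q => ps i f q + ps i g q := by
  funext p
  rw [ps_eq_fderiv ((hf.fun_add hg) p), ps_eq_fderiv (hf p), ps_eq_fderiv (hg p),
    fderiv_fun_add (hf p) (hg p)]
  rfl

theorem ps_fun_sub (hf : Differentiable ℝ f) (hg : Differentiable ℝ g) (i : Fin 3) :
    ps i (fun q => f q - g q) = fun q => ps i f q - ps i g q := by
  funext p
  rw [ps_eq_fderiv ((hf.fun_sub hg) p), ps_eq_fderiv (hf p), ps_eq_fderiv (hg p),
    fderiv_fun_sub (hf p) (hg p)]
  rfl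

theorem ps_const_mul (hf : Differentiable ℝ f) (c : ℝ) (i : Fin 3) :
    ps i (fun q => c * f q) = fun q => c * ps i f q := by
  funext p
  rw [ps_eq_fderiv ((hf.const_mul c) p), ps_eq_fderiv (hf p), fderiv_const_mul (hf p)]
  rfl

theorem ps_fun_sum {ι : Type*} {u : Finset ι} {F : ι → Spc → ℝ}
    (hF : ∀ l ∈ u, Differentiable ℝ (F l)) (i : Fin 3) :
    ps i (fun q => ∑ l ∈ u, F l q) = fun q => ∑ l ∈ u, ps i (F l) q := by
  funext p
  rw [ps_eq_fderiv (Differentiable.fun_sum hF p), fderiv_fun_sum fun l hl => hF l hl p]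
  simp only [FunLike.coe_sum, Finset.sum_apply]
  exact sum_congr rfl fun l hl => (ps_eq_fderiv (hF l hl p) i).symm

theorem apply_eq_of_pt_eq_zero {f : Spc → ℝ} (hf : Differentiable ℝ f) (h : ∀ p, pt f p = 0)
    (t₁ t₂ : ℝ) (x : Fin 3 → ℝ) : f (t₁, x) = f (t₂, x) :=
  is_const_of_deriv_eq_zero (hf.comp (differentiable_id.prodMk (differentiable_const x)))
    (fun s => h (s, x)) t₁ t₂

end Operators

theorem sum_kron_mul (i : Fin 3) (c : Fin 3 → ℝ) : ∑ l, kron i l * c l = c i := by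
  simp [kron]

theorem sum_ps_ps_comm {β : Fin 3 → Spc → ℝ} (hβ : ∀ l, ContDiff ℝ ∞ (β l)) (i : Fin 3)
    (p : Spc) : ∑ l, ps l (ps i (β l)) p = ps i (fun q => ∑ l, ps l (β l) q) p := by
  rw [ps_fun_sum fun l _ => ((hβ l).ps l).differentiable (by simp)]
  exact sum_congr rfl fun l _ => congrFun (ps_ps_comm (hβ l) l i) p

theorem sum_ps_pt_eq_of_E4 {β : Fin 3 → Spc → ℝ} {γ A : Fin 3 → Fin 3 → Spc → ℝ}
    (hβ : ∀ i, ContDiff ℝ ∞ (β i)) (hA : ∀ i j, ContDiff ℝ ∞ (A i j))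
    (E4 : ∀ i j p, pt (γ i j) p =
      -2 * A i j p + ps i (β j) p + ps j (β i) p
        - (2/3) * kron i j * ∑ l, ps l (β l) p) (i : Fin 3) (p : Spc) :
    ∑ l, ps l (pt (γ i l)) p =
      -2 * ∑ l, ps l (A i l) p + (1/3) * ps i (fun q => ∑ l, ps l (β l) q) p + lap (β i) p := by
  have hdiff {f : Spc → ℝ} (hf : ContDiff ℝ ∞ f) : Differentiable ℝ f :=
    hf.differentiable (by simp)
  have hAd (j l : Fin 3) : Differentiable ℝ (A j l) := hdiff (hA j l)
  have hβd (j l : Fin 3) : Differentiable ℝ (ps j (β l)) := hdiff ((hβ l).ps j)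
  have hdivd : Differentiable ℝ (fun q => ∑ l, ps l (β l) q) :=
    hdiff (ContDiff.sum fun l _ => (hβ l).ps l)
  have hterm (l : Fin 3) : ps l (pt (γ i l)) p =
      -2 * ps l (A i l) p + ps l (ps i (β l)) p + ps l (ps l (β i)) p
        - (2/3) * (kron i l * ps l (fun q => ∑ m, ps m (β m) q) p) := by
    rw [funext (E4 i l), ps_fun_sub, ps_fun_add, ps_fun_add, ps_const_mul, ps_const_mul]
    · simp only [mul_assoc]
    all_goals fun_prop
  simp only [hterm, sum_sub_distrib, sum_add_distrib, ← mul_sum, sum_kron_mul, sum_ps_ps_comm hβ]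
  rw [lap]
  ring

theorem Gamma_definition_constraint_evolution_general
    (κ : Spc → ℝ) (β Γ : Fin 3 → Spc → ℝ)
    (γ A : Fin 3 → Fin 3 → Spc → ℝ)
    (hβ : ∀ i, ContDiff ℝ (⊤ : ℕ∞) (β i)) (hΓ : ∀ i, ContDiff ℝ (⊤ : ℕ∞) (Γ i))
    (hγ : ∀ i j, ContDiff ℝ (⊤ : ℕ∞) (γ i j)) (hA : ∀ i j, ContDiff ℝ (⊤ : ℕ∞) (A i j))
    (E4 : ∀ i j p, pt (γ i j) p =
      -2 * A i j p + ps i (β j) p + ps j (β i) p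
        - (2/3) * kron i j * ∑ l, ps l (β l) p)
    (E6 : ∀ i p, pt (Γ i) p =
      -(4/3) * ps i κ p + (1/3) * ps i (fun q => ∑ l, ps l (β l) q) p + lap (β i) p)
    (M : Fin 3 → Spc → ℝ)
    (hM : ∀ i, M i = fun p => (∑ l, ps l (A i l) p) - (2/3) * ps i κ p) :
    (∀ i p, pt (fun q => Γ i q - ∑ l, ps l (γ i l) q) p = 2 * M i p) ∧
      ((∀ i p, M i p = 0) → ∀ i, ∀ t₁ t₂ : ℝ, ∀ x : Fin 3 → ℝ,
        Γ i (t₁, x) - (∑ l, ps l (γ i l) (t₁, x)) =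
          Γ i (t₂, x) - (∑ l, ps l (γ i l) (t₂, x))) := by
  have hdiv_gamma (i : Fin 3) : ContDiff ℝ ∞ (fun q => ∑ l, ps l (γ i l) q) :=
    ContDiff.sum fun l _ => (hγ i l).ps l
  have hevol (i : Fin 3) (p : Spc) :
      pt (fun q => Γ i q - ∑ l, ps l (γ i l) q) p = 2 * M i p := by
    rw [pt_fun_sub ((hΓ i).differentiable (by simp)) ((hdiv_gamma i).differentiable (by simp)),
      pt_fun_sum fun l _ => ((hγ i l).ps l).differentiable (by simp)]
    simp only [pt_ps_comm (hγ _ _)]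
    rw [sum_ps_pt_eq_of_E4 hβ hA E4, E6, hM]
    ring
  refine ⟨hevol, fun hM0 i => apply_eq_of_pt_eq_zero ?_ fun p => (hevol i p).trans ?_⟩
  · exact ((hΓ i).sub (hdiv_gamma i)).differentiable (by simp)
  · rw [hM0, mul_zero]

/-- If (E4) and (E6) hold, then `∂_t(Γ_i − ∂_l γ̃_il) = 2 M_i`; in particular, if the
momentum constraint `M_i = 0` holds everywhere, the constraint quantity
`Γ_i − ∂_l γ̃_il` is independent of time. -/
theorem Gamma_definition_constraint_evolution
    (κ : Spc → ℝ) (β Γ : Fin 3 → Spc → ℝ)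
    (γ A : Fin 3 → Fin 3 → Spc → ℝ)
    (hκ : ContDiff ℝ (⊤ : ℕ∞) κ)
    (hβ : ∀ i, ContDiff ℝ (⊤ : ℕ∞) (β i)) (hΓ : ∀ i, ContDiff ℝ (⊤ : ℕ∞) (Γ i))
    (hγ : ∀ i j, ContDiff ℝ (⊤ : ℕ∞) (γ i j)) (hA : ∀ i j, ContDiff ℝ (⊤ : ℕ∞) (A i j))
    (hγsym : ∀ i j, γ i j = γ j i) (hAsym : ∀ i j, A i j = A j i)
    (E4 : ∀ i j p, pt (γ i j) p =
      -2 * A i j p + ps i (β j) p + ps j (β i) p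
        - (2/3) * kron i j * ∑ l, ps l (β l) p)
    (E6 : ∀ i p, pt (Γ i) p =
      -(4/3) * ps i κ p + (1/3) * ps i (fun q => ∑ l, ps l (β l) q) p + lap (β i) p)
    (M : Fin 3 → Spc → ℝ)
    (hM : ∀ i, M i = fun p => (∑ l, ps l (A i l) p) - (2/3) * ps i κ p) :
    (∀ i p, pt (fun q => Γ i q - ∑ l, ps l (γ i l) q) p = 2 * M i p) ∧
      ((∀ i p, M i p = 0) → ∀ i, ∀ t₁ t₂ : ℝ, ∀ x : Fin 3 → ℝ,
        Γ i (t₁, x) - (∑ l, ps l (γ i l) (t₁, x)) =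
          Γ i (t₂, x) - (∑ l, ps l (γ i l) (t₂, x))) :=
  Gamma_definition_constraint_evolution_general κ β Γ γ A hβ hΓ hγ hA E4 E6 M hM
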